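/- The odd resistance is the limit of shorted resistances: Let G be a network and let p ≠ q be vertices of G. Then odd_res(p,q) equals the supremum, over all finite vertex sets S containing p and q, of the short resistance R_short(p,q,S). -/

import Mathlib

open scoped ENNReal
open Filter

variable {V : Type*}

/-- A *flow* on a graph: an antisymmetric function on ordered pairs of vertices
that vanishes on non-adjacent pairs. -/
def IsFlow (G : SimpleGraph V) (θ : V → V → ℝ) : Prop :=
  (∀ u v, θ u v = -θ v u) ∧ ∀ u v, ¬G.Adj u v → θ u v = 0

/-- The divergence (source strength) of a flow at a vertex. -/
noncomputable def divg (G : SimpleGraph V) [G.LocallyFinite] (θ : V → V → ℝ) (v : V) : ℝ :=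
  ∑ u ∈ G.neighborFinset v, θ v u

/-- The energy `(1/2) ∑ r(u,v) θ(u,v)²` dissipated by a flow, valued in `[0,∞]`. -/
noncomputable def energy (r θ : V → V → ℝ) : ℝ≥0∞ :=
  2⁻¹ * ∑' p : V × V, ENNReal.ofReal (r p.1 p.2 * θ p.1 p.2 ^ 2)

open Classical in
/-- The source distribution with a unit source at `p` and a unit sink at `q`. -/
noncomputable def pointSource (p q v : V) : ℝ :=
  if v = p then 1 else if v = q then -1 else 0

/-- The odd resistance: the infimum of the energy over all finite-energy unit
flows from `p` to `q`. -/
noncomputable def oddRes (G : SimpleGraph V) [G.LocallyFinite] (r : V → V → ℝ)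
    (p q : V) : ℝ≥0∞ :=
  ⨅ (θ : V → V → ℝ) (_ : IsFlow G θ ∧ energy r θ ≠ ⊤ ∧ divg G θ = pointSource p q),
    energy r θ

/-- The cut resistance: the infimum of the energy over all unit flows from `p` to `q`
vanishing on every edge with an endpoint outside `S`. -/
noncomputable def cutRes (G : SimpleGraph V) [G.LocallyFinite] (r : V → V → ℝ)
    (p q : V) (S : Finset V) : ℝ≥0∞ :=
  ⨅ (θ : V → V → ℝ) (_ : IsFlow G θ ∧ divg G θ = pointSource p q ∧
      ∀ u v, (u ∉ S ∨ v ∉ S) → θ u v = 0), energy r θ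

/-- The even resistance: the infimum of the cut resistances over all finite
vertex sets containing `p` and `q`. -/
noncomputable def evenRes (G : SimpleGraph V) [G.LocallyFinite] (r : V → V → ℝ)
    (p q : V) : ℝ≥0∞ :=
  ⨅ (S : Finset V) (_ : p ∈ S ∧ q ∈ S), cutRes G r p q S

/-- The short resistance: the infimum of the energy over all antisymmetric edge
functions supported on edges with at least one endpoint in `S` whose divergence
at every vertex of `S` is that of a unit flow from `p` to `q`. -/
noncomputable def shortRes (G : SimpleGraph V) [G.LocallyFinite] (r : V → V → ℝ)
    (p q : V) (S : Finset V) : ℝ≥0∞ :=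
  ⨅ (θ : V → V → ℝ) (_ : (∀ u v, θ u v = -θ v u) ∧ (∀ u v, ¬G.Adj u v → θ u v = 0) ∧
      (∀ u v, u ∉ S → v ∉ S → θ u v = 0) ∧
      ∀ v ∈ S, divg G θ v = pointSource p q v), energy r θ

/-- A function on the vertices of a network is harmonic if the net current it
induces out of each vertex is zero. -/
def Harmonic (G : SimpleGraph V) [G.LocallyFinite] (r : V → V → ℝ) (u : V → ℝ) : Prop :=
  ∀ v, ∑ w ∈ G.neighborFinset v, (u v - u w) / r v w = 0

open Classical in
/-- The Dirichlet energy `(1/2) ∑ (u(v)-u(w))²/r(v,w)` of a function on the vertices. -/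
noncomputable def fnEnergy (G : SimpleGraph V) (r : V → V → ℝ) (u : V → ℝ) : ℝ≥0∞ :=
  2⁻¹ * ∑' p : V × V,
    if G.Adj p.1 p.2 then ENNReal.ofReal ((u p.1 - u p.2) ^ 2 / r p.1 p.2) else 0

/-!
Restricting a unit flow to the edges that meet `S` gives a competitor for the shorted problem,
so every short resistance is at most the odd resistance. Conversely, suppose all short
resistances are below a finite `c` and pick, for every finite `S`, a competitor `θ_S` of energy
below `c`. Energy at most `c` bounds `|θ(u,v)|` by `√(2c / r(u,v))`, so by Tychonoff all `θ_S` lie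
in a compact set of flows, and they have a cluster point along the net of finite sets. Since
divergences are finite sums and the divergence constraint at `v` holds as soon as `v ∈ S`, the
cluster point is a unit flow on the whole graph, and lower semicontinuity of the energy bounds
its energy by `c`.
-/

section Energy

variable {r : V → V → ℝ}

theorem energy_lowerSemicontinuous (r : V → V → ℝ) : LowerSemicontinuous (energy r) := by
  unfold energy
  simp_rw [← ENNReal.tsum_mul_left]
  refine lowerSemicontinuous_tsum fun e => Continuous.lowerSemicontinuous ?_
  exact ENNReal.continuous_const_mul (by simp) |>.comp <|
    ENNReal.continuous_ofReal.comp <| by fun_prop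

theorem ofReal_mul_sq_le_two_mul_energy (r θ : V → V → ℝ) (u v : V) :
    ENNReal.ofReal (r u v * θ u v ^ 2) ≤ 2 * energy r θ := by
  rw [energy, ← mul_assoc, ENNReal.mul_inv_cancel two_ne_zero ENNReal.ofNat_ne_top, one_mul]
  exact ENNReal.le_tsum (f := fun e : V × V => ENNReal.ofReal (r e.1 e.2 * θ e.1 e.2 ^ 2)) (u, v)

theorem abs_le_of_energy_le {θ : V → V → ℝ} {c : ℝ≥0∞} (hc : c ≠ ⊤) (hθ : energy r θ ≤ c)
    {u v : V} (huv : 0 < r u v) : |θ u v| ≤ √(2 * c.toReal / r u v) := by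
  have h2c : 2 * c ≠ ⊤ := ENNReal.mul_ne_top ENNReal.ofNat_ne_top hc
  have hle : r u v * θ u v ^ 2 ≤ 2 * c.toReal := by
    have := (ofReal_mul_sq_le_two_mul_energy r θ u v).trans (mul_le_mul_right hθ 2)
    simpa [ENNReal.toReal_mul] using (ENNReal.ofReal_le_iff_le_toReal h2c).mp this
  refine Real.abs_le_sqrt ?_
  rw [le_div_iff₀ huv]
  linarith

theorem energy_ite_le (r θ : V → V → ℝ) (P : V → V → Prop) [∀ u v, Decidable (P u v)] :
    energy r (fun u v => if P u v then θ u v else 0) ≤ energy r θ := by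
  refine mul_le_mul_right (ENNReal.tsum_le_tsum fun e => ?_) _
  dsimp only
  split_ifs <;> simp

end Energy

section Resistance

theorem isClosed_setOf_isFlow (G : SimpleGraph V) : IsClosed {θ : V → V → ℝ | IsFlow G θ} := by
  simp only [IsFlow, Set.ofPred_and, Set.ofPred_forall]
  refine .inter ?_ ?_ <;> refine isClosed_iInter fun u => isClosed_iInter fun v => ?_
  · exact isClosed_eq (by fun_prop) (by fun_prop)
  · exact isClosed_iInter fun _ => isClosed_eq (by fun_prop) continuous_const

theorem continuous_divg (G : SimpleGraph V) [G.LocallyFinite] (v : V) :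
    Continuous fun θ : V → V → ℝ => divg G θ v :=
  continuous_finsetSum _ fun _ _ => by fun_prop

variable {G : SimpleGraph V} {r : V → V → ℝ}

theorem isCompact_setOf_isFlow_energy_le (hr : ∀ u v, G.Adj u v → 0 < r u v) {c : ℝ≥0∞}
    (hc : c ≠ ⊤) : IsCompact {θ : V → V → ℝ | IsFlow G θ ∧ energy r θ ≤ c} := by
  have hbox : IsCompact (Set.univ.pi fun u => Set.univ.pi fun v =>
      Set.Icc (-√(2 * c.toReal / r u v)) √(2 * c.toReal / r u v)) :=
    isCompact_univ_pi fun _ => isCompact_univ_pi fun _ => isCompact_Icc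
  refine hbox.of_isClosed_subset ?_ ?_
  · rw [Set.ofPred_and]
    exact (isClosed_setOf_isFlow G).inter ((energy_lowerSemicontinuous r).isClosed_preimage c)
  · rintro θ ⟨hθ, hθE⟩
    simp only [Set.mem_pi, Set.mem_univ, forall_const, Set.mem_Icc, ← abs_le]
    intro u v
    by_cases huv : G.Adj u v
    · exact abs_le_of_energy_le hc hθE (hr u v huv)
    · rw [hθ.2 u v huv, abs_zero]
      positivity

variable [G.LocallyFinite] {p q : V}

theorem shortRes_le_energy {θ : V → V → ℝ} (hθ : IsFlow G θ) (hdiv : divg G θ = pointSource p q)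
    (S : Finset V) : shortRes G r p q S ≤ energy r θ := by
  classical
  let θS : V → V → ℝ := fun u v => if u ∈ S ∨ v ∈ S then θ u v else 0
  have hanti : ∀ u v, θS u v = -θS v u := by
    intro u v
    simp only [θS, or_comm (a := u ∈ S)]
    split_ifs <;> simp [hθ.1 u v]
  have hadj : ∀ u v, ¬G.Adj u v → θS u v = 0 := by
    intro u v huv
    simp [θS, hθ.2 u v huv]
  have hout : ∀ u v, u ∉ S → v ∉ S → θS u v = 0 := by
    intro u v hu hv
    simp [θS, hu, hv]
  have hdivS : ∀ v ∈ S, divg G θS v = pointSource p q v := by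
    intro v hv
    simp only [divg, θS, hv, true_or, if_true]
    exact congrFun hdiv v
  exact (iInf₂_le θS ⟨hanti, hadj, hout, hdivS⟩).trans (energy_ite_le r θ _)

theorem oddRes_le_of_forall_shortRes_lt (hr : ∀ u v, G.Adj u v → 0 < r u v) {c : ℝ≥0∞}
    (hc : c ≠ ⊤) (hS : ∀ S : Finset V, p ∈ S ∧ q ∈ S → shortRes G r p q S < c) :
    oddRes G r p q ≤ c := by
  classical
  have hnear := fun S : Finset V => hS (insert p (insert q S)) ⟨by simp, by simp⟩
  simp only [shortRes, iInf_lt_iff] at hnear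
  choose θ hθ hθE using hnear
  obtain ⟨x, ⟨hx, hxE⟩, hclust⟩ := (isCompact_setOf_isFlow_energy_le hr hc).exists_mapClusterPt
    (f := atTop) (u := θ) (tendsto_principal.2 (.of_forall fun S =>
      ⟨⟨(hθ S).1, (hθ S).2.1⟩, (hθE S).le⟩))
  have hdiv : ∀ v, divg G x v = pointSource p q v := by
    intro v
    refine IsClosed.mem_of_mapClusterPt (s := {θ : V → V → ℝ | divg G θ v = pointSource p q v})
      (isClosed_eq (continuous_divg G v) continuous_const) hclust
      ((eventually_ge_atTop {v}).mono fun S hS => (hθ S).2.2.2 v ?_)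
    exact Finset.mem_insert_of_mem (Finset.mem_insert_of_mem (Finset.singleton_subset_iff.mp hS))
  exact (iInf₂_le x ⟨hx, ne_top_of_le_ne_top hc hxE, funext hdiv⟩).trans hxE

end Resistance

theorem oddRes_eq_iSup_shortRes_general
    (G : SimpleGraph V) [G.LocallyFinite]
    (r : V → V → ℝ) (hr_pos : ∀ u v, G.Adj u v → 0 < r u v)
    (p q : V) :
    oddRes G r p q = ⨆ (S : Finset V) (_ : p ∈ S ∧ q ∈ S), shortRes G r p q S := by
  refine le_antisymm (le_of_forall_gt_imp_ge_of_dense fun c hc => ?_)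
    (iSup₂_le fun S _ => le_iInf₂ fun θ hθ => shortRes_le_energy hθ.1 hθ.2.2 S)
  rcases eq_or_ne c ⊤ with rfl | hc_top
  · exact le_top
  exact oddRes_le_of_forall_shortRes_lt hr_pos hc_top fun S hS => (le_iSup₂ S hS).trans_lt hc

/-- **The odd resistance is the limit of shorted resistances**: it is the supremum of the
short resistances `R_short(p,q,S)` over all finite vertex sets `S` containing `p` and `q`. -/
theorem oddRes_eq_iSup_shortRes
    (G : SimpleGraph V) [G.LocallyFinite] (hG : G.Connected)
    (r : V → V → ℝ) (hr_pos : ∀ u v, G.Adj u v → 0 < r u v)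
    (hr_symm : ∀ u v, r u v = r v u)
    (p q : V) (hpq : p ≠ q) :
    oddRes G r p q = ⨆ (S : Finset V) (_ : p ∈ S ∧ q ∈ S), shortRes G r p q S :=
  oddRes_eq_iSup_shortRes_general G r hr_pos p q
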